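/- If gcd(c,d) = 1, then the generalized quadratic Gauss sum satisfies the multiplicativity relation G(a,b,cd) = G(ac,b,d) · G(ad,b,c). -/

import Mathlib

/-!
Over `ℤ/N`, `G(a,b,N)` is the sum of `ψ_N(ax² + bx)` for the standard additive character
`ψ_N(k) = e^{2πik/N}`. For coprime `c, d` every residue modulo `cd` is uniquely `cx + dy` with
`x` modulo `d` and `y` modulo `c`. Modulo `cd`, `a(cx+dy)² + b(cx+dy)` equals
`c(acx² + bx) + d(ady² + by)`, and `ψ_{cd}(cu) = ψ_d(u)`, so the sum factors.
-/

open Complex Real Finset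

/-- The generalized quadratic Gauss sum `G(a,b,c) = ∑_{n=0}^{c-1} e^{2πi(an²+bn)/c}`. -/
noncomputable def gaussSumG (a b : ℤ) (c : ℕ) : ℂ :=
  ∑ n ∈ Finset.range c,
    Complex.exp (2 * Real.pi * Complex.I * ((a * (n : ℤ) ^ 2 + b * (n : ℤ) : ℤ) : ℂ) / (c : ℂ))

namespace ZMod

theorem sum_range_natCast {M : Type*} [AddCommMonoid M] (N : ℕ) [NeZero N]
    (f : ZMod N → M) :
    ∑ n ∈ range N, f n = ∑ x, f x :=
  Finset.sum_bij' (fun n _ ↦ (n : ZMod N)) (fun x _ ↦ x.val)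
    (fun _ _ ↦ mem_univ _) (fun x _ ↦ mem_range.2 x.val_lt)
    (fun _ hn ↦ val_cast_of_lt (mem_range.1 hn)) (fun x _ ↦ natCast_zmod_val x)
    (fun _ _ ↦ rfl)

theorem sum_eq_sum_mul_val_add_mul_val {M : Type*} [AddCommMonoid M] {c d : ℕ} [NeZero c]
    [NeZero d] (h : c.Coprime d) (f : ZMod (c * d) → M) :
    ∑ z, f z = ∑ p : ZMod d × ZMod c, f (c * p.1.val + d * p.2.val) := by
  let φ : ZMod d × ZMod c → ZMod (c * d) := fun p ↦ c * p.1.val + d * p.2.val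
  have hinj : Function.Injective φ := by
    rintro ⟨x, y⟩ ⟨x', y'⟩ hxy
    have hx : (c : ZMod d) * x = c * x' := by
      simpa only [φ, map_add, map_mul, map_natCast, natCast_self, zero_mul, add_zero,
        natCast_zmod_val] using congrArg (castHom (dvd_mul_left d c) (ZMod d)) hxy
    have hy : (d : ZMod c) * y = d * y' := by
      simpa only [φ, map_add, map_mul, map_natCast, natCast_self, zero_mul, zero_add,
        natCast_zmod_val] using congrArg (castHom (dvd_mul_right c d) (ZMod c)) hxy
    exact Prod.ext (((isUnit_iff_coprime c d).2 h).mul_left_cancel hx)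
      (((isUnit_iff_coprime d c).2 h.symm).mul_left_cancel hy)
  have hbij : Function.Bijective φ :=
    (Fintype.bijective_iff_injective_and_card φ).2 ⟨hinj, by simp [mul_comm]⟩
  exact (Fintype.sum_bijective φ hbij _ _ fun _ ↦ rfl).symm

theorem stdAddChar_natCast_mul {N c d : ℕ} [NeZero N] [NeZero d] (hN : c * d = N) (k : ℤ) :
    stdAddChar ((c : ZMod N) * (k : ZMod N)) = stdAddChar (k : ZMod d) := by
  have hd : (d : ℂ) ≠ 0 := Nat.cast_ne_zero.2 (NeZero.ne d)
  have hc : (c : ℂ) ≠ 0 := by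
    rintro hc0
    exact NeZero.ne N (by rw [← hN, Nat.cast_eq_zero.1 hc0, zero_mul])
  rw [← Int.cast_natCast, ← Int.cast_mul, stdAddChar_coe, stdAddChar_coe, ← hN]
  congr 1
  push_cast
  field_simp

end ZMod

theorem gaussSumG_eq_sum_stdAddChar (a b : ℤ) (N : ℕ) [NeZero N] :
    gaussSumG a b N =
      ∑ x : ZMod N, ZMod.stdAddChar ((a : ZMod N) * x ^ 2 + (b : ZMod N) * x) := by
  rw [gaussSumG, ← ZMod.sum_range_natCast]
  refine sum_congr rfl fun n _ ↦ ?_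
  rw [← ZMod.stdAddChar_coe]
  push_cast
  rfl

/-- If `gcd(c,d) = 1`, then `G(a,b,cd) = G(ac,b,d) · G(ad,b,c)`. -/
theorem gaussSumG_multiplicative (a b : ℤ) (c d : ℕ) (hc : 0 < c) (hd : 0 < d) (h : Nat.gcd c d = 1) :
    gaussSumG a b (c * d) = gaussSumG (a * (c : ℤ)) b d * gaussSumG (a * (d : ℤ)) b c := by
  have : NeZero c := ⟨hc.ne'⟩
  have : NeZero d := ⟨hd.ne'⟩
  rw [gaussSumG_eq_sum_stdAddChar, gaussSumG_eq_sum_stdAddChar, gaussSumG_eq_sum_stdAddChar,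
    ZMod.sum_eq_sum_mul_val_add_mul_val h, Fintype.sum_mul_sum, Fintype.sum_prod_type]
  refine sum_congr rfl fun x _ ↦ sum_congr rfl fun y _ ↦ ?_
  have hcross : (a : ZMod (c * d)) * (c * x.val + d * y.val) ^ 2 + b * (c * x.val + d * y.val) =
      c * ((a * c * x.val ^ 2 + b * x.val : ℤ) : ZMod (c * d)) +
        d * ((a * d * y.val ^ 2 + b * y.val : ℤ) : ZMod (c * d)) := by
    have hcd : ((c * d : ℕ) : ZMod (c * d)) = 0 := ZMod.natCast_self _
    push_cast at hcd ⊢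
    linear_combination (2 * a * x.val * y.val) * hcd
  rw [hcross, AddChar.map_add_eq_mul, ZMod.stdAddChar_natCast_mul rfl,
    ZMod.stdAddChar_natCast_mul (mul_comm d c)]
  push_cast
  simp only [ZMod.natCast_zmod_val]
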